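/- The maps Υ and Φ form an isomorphism between the continuation-enclosing style calculus CES and the commutative normal forms CNF of the call-by-value lambda-calculus with generalized applications: they are mutually inverse bijections and map single reduction steps to single reduction steps in both directions. -/
import Mathlib


namespace Paper

mutual
/-- Terms of the continuation-enclosing style calculus CES. -/
inductive CeTm : Type
| val : CeVal → CeTm
| lett : String → CeVal → CeVal → CeTm → CeTm   -- let x := V W in M
/-- Values of CES. -/
inductive CeVal : Type
| var : String → CeVal
| lam : String → CeTm → CeVal
end

mutual
def CeVal.sub (V : CeVal) (x : String) : CeVal → CeVal
| .var z => if z = x then V else .var z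
| .lam z M => if z = x then .lam z M else .lam z (CeTm.sub V x M)
def CeTm.sub (V : CeVal) (x : String) : CeTm → CeTm
| .val W => .val (CeVal.sub V x W)
| .lett y A B M =>
    .lett y (CeVal.sub V x A) (CeVal.sub V x B) (if y = x then M else CeTm.sub V x M)
end

/-- The generalized let `LET y := M in P` of CES (integrating a let_v-step). -/
def LETce (y : String) : CeTm → CeTm → CeTm
| .val V, P => CeTm.sub V y P
| .lett x A B N, P => .lett x A B (LETce y N P)

mutual
/-- One-step reduction of CES (rule βv), closed under all contexts. -/
inductive CeStep : CeTm → CeTm → Prop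
| betav {y x M V P} :
    CeStep (.lett y (.lam x M) V P) (LETce y (CeTm.sub V x M) P)
| valC {V V'} : CeStepV V V' → CeStep (.val V) (.val V')
| lett1 {y A A' B M} : CeStepV A A' → CeStep (.lett y A B M) (.lett y A' B M)
| lett2 {y A B B' M} : CeStepV B B' → CeStep (.lett y A B M) (.lett y A B' M)
| lett3 {y A B M M'} : CeStep M M' → CeStep (.lett y A B M) (.lett y A B M')
/-- One-step reduction of CES values. -/
inductive CeStepV : CeVal → CeVal → Prop
| lamC {x M M'} : CeStep M M' → CeStepV (.lam x M) (.lam x M')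
end

mutual
/-- Commutative normal forms of the call-by-value λ-calculus with generalized
applications (terms). -/
inductive GTm : Type
| val : GVal → GTm
| gapp : GVal → GVal → String → GTm → GTm        -- V(W, x.P)
/-- Values of CNF. -/
inductive GVal : Type
| var : String → GVal
| lam : String → GTm → GVal
end

mutual
def GVal.sub (V : GVal) (x : String) : GVal → GVal
| .var z => if z = x then V else .var z
| .lam z M => if z = x then .lam z M else .lam z (GTm.sub V x M)
def GTm.sub (V : GVal) (x : String) : GTm → GTm
| .val W => .val (GVal.sub V x W)
| .gapp A B y M =>
    .gapp (GVal.sub V x A) (GVal.sub V x B) y (if y = x then M else GTm.sub V x M)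
end

/-- Left substitution ⟨N\x⟩P in CNF. -/
def lsub : GTm → String → GTm → GTm
| .val V, x, P => GTm.sub V x P
| .gapp V W y N, x, P => .gapp V W y (lsub N x P)

mutual
/-- One-step reduction of CNF (rule βv), closed under all contexts. -/
inductive GStep : GTm → GTm → Prop
| betav {y M W x P} :
    GStep (.gapp (.lam y M) W x P) (lsub (GTm.sub W y M) x P)
| valC {V V'} : GStepV V V' → GStep (.val V) (.val V')
| gapp1 {V V' W x P} : GStepV V V' → GStep (.gapp V W x P) (.gapp V' W x P)
| gapp2 {V W W' x P} : GStepV W W' → GStep (.gapp V W x P) (.gapp V W' x P)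
| gapp3 {V W x P P'} : GStep P P' → GStep (.gapp V W x P) (.gapp V W x P')
/-- One-step reduction of CNF values. -/
inductive GStepV : GVal → GVal → Prop
| lamC {x M M'} : GStep M M' → GStepV (.lam x M) (.lam x M')
end

mutual
/-- The map Υ from CES to CNF (values). -/
def upsV : CeVal → GVal
| .var x => .var x
| .lam x M => .lam x (upsT M)
/-- The map Υ from CES to CNF (terms). -/
def upsT : CeTm → GTm
| .val V => .val (upsV V)
| .lett x A B M => .gapp (upsV A) (upsV B) x (upsT M)
end

mutual
/-- The map Φ from CNF to CES (values). -/
def phiV : GVal → CeVal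
| .var x => .var x
| .lam x M => .lam x (phiT M)
/-- The map Φ from CNF to CES (terms). -/
def phiT : GTm → CeTm
| .val V => .val (phiV V)
| .gapp V W x M => .lett x (phiV V) (phiV W) (phiT M)
end

mutual
theorem phi_ups_T : ∀ M : CeTm, phiT (upsT M) = M
| .val V => by simp [upsT, phiT, phi_ups_V V]
| .lett x A B M => by simp [upsT, phiT, phi_ups_V A, phi_ups_V B, phi_ups_T M]
theorem phi_ups_V : ∀ V : CeVal, phiV (upsV V) = V
| .var x => rfl
| .lam x M => by simp [upsV, phiV, phi_ups_T M]
end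

mutual
theorem ups_phi_T : ∀ M : GTm, upsT (phiT M) = M
| .val V => by simp [upsT, phiT, ups_phi_V V]
| .gapp A B x M => by simp [upsT, phiT, ups_phi_V A, ups_phi_V B, ups_phi_T M]
theorem ups_phi_V : ∀ V : GVal, upsV (phiV V) = V
| .var x => rfl
| .lam x M => by simp [upsV, phiV, ups_phi_T M]
end

mutual
theorem ups_sub_T (V : CeVal) (x : String) :
    ∀ M : CeTm, upsT (CeTm.sub V x M) = GTm.sub (upsV V) x (upsT M)
| .val W => by simp [CeTm.sub, GTm.sub, upsT, ups_sub_V V x W]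
| .lett y A B M => by
    by_cases h : y = x <;>
      simp [CeTm.sub, GTm.sub, upsT, h, ups_sub_V V x A, ups_sub_V V x B, ups_sub_T V x M]
theorem ups_sub_V (V : CeVal) (x : String) :
    ∀ W : CeVal, upsV (CeVal.sub V x W) = GVal.sub (upsV V) x (upsV W)
| .var z => by by_cases h : z = x <;> simp [CeVal.sub, GVal.sub, upsV, h]
| .lam z M => by
    by_cases h : z = x <;> simp [CeVal.sub, GVal.sub, upsV, h, ups_sub_T V x M]
end

mutual
theorem phi_sub_T (V : GVal) (x : String) :
    ∀ M : GTm, phiT (GTm.sub V x M) = CeTm.sub (phiV V) x (phiT M)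
| .val W => by simp [CeTm.sub, GTm.sub, phiT, phi_sub_V V x W]
| .gapp A B y M => by
    by_cases h : y = x <;>
      simp [CeTm.sub, GTm.sub, phiT, h, phi_sub_V V x A, phi_sub_V V x B, phi_sub_T V x M]
theorem phi_sub_V (V : GVal) (x : String) :
    ∀ W : GVal, phiV (GVal.sub V x W) = CeVal.sub (phiV V) x (phiV W)
| .var z => by by_cases h : z = x <;> simp [CeVal.sub, GVal.sub, phiV, h]
| .lam z M => by
    by_cases h : z = x <;> simp [CeVal.sub, GVal.sub, phiV, h, phi_sub_T V x M]
end

theorem ups_LET (y : String) : ∀ N P : CeTm,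
    upsT (LETce y N P) = lsub (upsT N) y (upsT P)
| .val V, P => by simp [LETce, upsT, lsub, ups_sub_T]
| .lett x A B N, P => by simp [LETce, upsT, lsub, ups_LET y N P]

theorem phi_lsub (x : String) : ∀ N P : GTm,
    phiT (lsub N x P) = LETce x (phiT N) (phiT P)
| .val V, P => by simp [LETce, phiT, lsub, phi_sub_T]
| .gapp V W y N, P => by simp [LETce, phiT, lsub, phi_lsub x N P]

mutual
theorem ups_step : ∀ {M N : CeTm}, CeStep M N → GStep (upsT M) (upsT N)
| _, _, .betav (y := y) (x := x) (M := M) (V := V) (P := P) => by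
    have := GStep.betav (y := x) (M := upsT M) (W := upsV V) (x := y) (P := upsT P)
    simpa [upsT, upsV, ups_LET, ups_sub_T] using this
| _, _, .valC h => GStep.valC (ups_stepV h)
| _, _, .lett1 h => GStep.gapp1 (ups_stepV h)
| _, _, .lett2 h => GStep.gapp2 (ups_stepV h)
| _, _, .lett3 h => GStep.gapp3 (ups_step h)
theorem ups_stepV : ∀ {V W : CeVal}, CeStepV V W → GStepV (upsV V) (upsV W)
| _, _, .lamC h => GStepV.lamC (ups_step h)
end

mutual
theorem phi_step : ∀ {M N : GTm}, GStep M N → CeStep (phiT M) (phiT N)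
| _, _, .betav (y := y) (M := M) (W := W) (x := x) (P := P) => by
    have := CeStep.betav (y := x) (x := y) (M := phiT M) (V := phiV W) (P := phiT P)
    simpa [phiT, phiV, phi_lsub, phi_sub_T] using this
| _, _, .valC h => CeStep.valC (phi_stepV h)
| _, _, .gapp1 h => CeStep.lett1 (phi_stepV h)
| _, _, .gapp2 h => CeStep.lett2 (phi_stepV h)
| _, _, .gapp3 h => CeStep.lett3 (phi_step h)
theorem phi_stepV : ∀ {V W : GVal}, GStepV V W → CeStepV (phiV V) (phiV W)
| _, _, .lamC h => CeStepV.lamC (phi_step h)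
end

/-- Υ and Φ form an isomorphism between CES and CNF: mutually inverse
bijections mapping single reduction steps to single reduction steps, both ways. -/
theorem stmt17 :
    (∀ M : CeTm, phiT (upsT M) = M) ∧
    (∀ V : CeVal, phiV (upsV V) = V) ∧
    (∀ M : GTm, upsT (phiT M) = M) ∧
    (∀ V : GVal, upsV (phiV V) = V) ∧
    (∀ M N : CeTm, CeStep M N → GStep (upsT M) (upsT N)) ∧
    (∀ M N : GTm, GStep M N → CeStep (phiT M) (phiT N)) := by
  exact ⟨phi_ups_T, phi_ups_V, ups_phi_T, ups_phi_V,
    fun _ _ => ups_step, fun _ _ => phi_step⟩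

end Paper
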